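/- The uniform limit y of the extended Picard iteration satisfies the integral equation y(x) = y_0(x) + ∫_a^x e^{(x-s)A} G(s, y(s)) ds for all x in [a,b]. -/

import Mathlib

/-!
Passing to the limit in the Picard recursion. Each iterate is continuous on `[a, b]`, because
`∫_a^x e^{(x-s)A} g(s) ds = e^{xA} ∫_a^x e^{-sA} g(s) ds` is continuous in `x` for continuous `g`.
Since `G` is `K`-Lipschitz in the state and `e^{(x-s)A}` is bounded for `s ∈ [a, b]`, the integrands
`e^{(x-s)A} G(s, y_k(s))` converge uniformly to `e^{(x-s)A} G(s, y(s))`, so the integrals converge,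
and the limit of the recursion is the integral equation.
-/

open NormedSpace Set Filter Topology intervalIntegral
open scoped NNReal Interval

theorem TendstoUniformlyOn.comp_lipschitzWith {α β γ ι : Type*} [PseudoMetricSpace β]
    [PseudoMetricSpace γ] {Φ : α → β → γ} {K : ℝ≥0} {S : Set α}
    {F : ι → α → β} {f : α → β} {p : Filter ι}
    (h : TendstoUniformlyOn F f p S) (hΦ : ∀ s ∈ S, LipschitzWith K (Φ s)) :
    TendstoUniformlyOn (fun i s => Φ s (F i s)) (fun s => Φ s (f s)) p S := by
  rw [Metric.tendstoUniformlyOn_iff] at h ⊢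
  intro ε hε
  filter_upwards [h (ε / (K + 1)) (by positivity)] with i hi s hs
  calc dist (Φ s (f s)) (Φ s (F i s)) ≤ K * dist (f s) (F i s) := (hΦ s hs).dist_le_mul _ _
    _ ≤ K * (ε / (K + 1)) := by gcongr; exact (hi s hs).le
    _ < ε := by
      rw [← mul_div_assoc, div_lt_iff₀ (by positivity)]
      nlinarith

theorem TendstoUniformlyOn.clm_apply {X E F ι : Type*} [TopologicalSpace X]
    [NormedAddCommGroup E] [NormedSpace ℝ E] [NormedAddCommGroup F] [NormedSpace ℝ F]
    {S : Set X} {T : X → E →L[ℝ] F} {u : ι → X → E} {v : X → E} {p : Filter ι}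
    (h : TendstoUniformlyOn u v p S) (hS : IsCompact S) (hT : ContinuousOn T S) :
    TendstoUniformlyOn (fun i s => T s (u i s)) (fun s => T s (v s)) p S := by
  obtain ⟨M, hM⟩ := hS.bddAbove_image hT.nnnorm
  exact h.comp_lipschitzWith fun s hs => (T s).lipschitz.weaken (hM (mem_image_of_mem _ hs))

section ExpKernel

variable {𝔸 : Type*} [NormedRing 𝔸] [NormedAlgebra ℝ 𝔸] [CompleteSpace 𝔸]

theorem exp_sub_smul (A : 𝔸) (x s : ℝ) : exp ((x - s) • A) = exp (x • A) * exp ((-s) • A) := by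
  rw [sub_eq_add_neg, add_smul]
  refine exp_add_of_commute_of_mem_ball (𝕂 := ℝ)
    (((Commute.refl A).smul_left x).smul_right _) ?_ ?_ <;> simp [expSeries_radius_eq_top]

theorem continuous_exp_smul (A : 𝔸) : Continuous fun t : ℝ => exp (t • A) :=
  (differentiable_exp_smul_const ℝ A).continuous

end ExpKernel

variable {E : Type*} [NormedAddCommGroup E] [NormedSpace ℝ E] [CompleteSpace E]

theorem continuousOn_integral_exp_sub_smul_apply (A : E →L[ℝ] E) {g : ℝ → E} {a b : ℝ}
    (hab : a ≤ b) (hg : ContinuousOn g (Icc a b)) :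
    ContinuousOn (fun x => ∫ s in a..x, exp ((x - s) • A) (g s)) (Icc a b) := by
  have hcont : ContinuousOn (fun s => exp ((-s) • A) (g s)) (Icc a b) :=
    ((continuous_exp_smul A).comp continuous_neg).continuousOn.clm_apply hg
  have hprim : ContinuousOn (fun x => ∫ s in a..x, exp ((-s) • A) (g s)) (Icc a b) := by
    simpa only [uIcc_of_le hab] using
      continuousOn_primitive_interval (hcont.mono (uIcc_of_le hab).subset).integrableOn_uIcc
  refine ((continuous_exp_smul A).continuousOn.clm_apply hprim).congr fun x hx => ?_
  have hint : IntervalIntegrable (fun s => exp ((-s) • A) (g s)) MeasureTheory.volume a x :=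
    (hcont.mono (uIcc_subset_Icc (left_mem_Icc.2 hab) hx)).intervalIntegrable
  dsimp only
  rw [← ContinuousLinearMap.intervalIntegral_comp_comm _ hint]
  refine integral_congr fun s _ => ?_
  rw [exp_sub_smul A x s]
  rfl

open NormedSpace intervalIntegral Filter in
/-- The uniform limit y of the extended Picard iteration satisfies the integral
equation y(x) = y_0(x) + ∫_a^x e^{(x-s)A} G(s, y(s)) ds for all x in [a,b]. -/
theorem stmt_4 (N : ℕ) (a b : ℝ) (hab : a ≤ b)
    (A : EuclideanSpace ℝ (Fin N) →L[ℝ] EuclideanSpace ℝ (Fin N))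
    (G : ℝ → EuclideanSpace ℝ (Fin N) → EuclideanSpace ℝ (Fin N))
    (hGcont : ContinuousOn (fun p : ℝ × EuclideanSpace ℝ (Fin N) => G p.1 p.2)
      (Set.Icc a b ×ˢ Set.univ))
    (K : NNReal) (hGlip : ∀ x ∈ Set.Icc a b, LipschitzWith K (G x))
    (y : ℕ → ℝ → EuclideanSpace ℝ (Fin N))
    (hy0 : ContinuousOn (y 0) (Set.Icc a b))
    (hiter : ∀ k : ℕ, ∀ x : ℝ, y (k + 1) x
      = y 0 x + ∫ s in a..x, (exp ((x - s) • A)) (G s (y k s)))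
    (ylim : ℝ → EuclideanSpace ℝ (Fin N))
    (hconv : TendstoUniformlyOn y ylim atTop (Set.Icc a b)) :
    ∀ x ∈ Set.Icc a b,
      ylim x = y 0 x + ∫ s in a..x, (exp ((x - s) • A)) (G s (ylim s)) := by
  have hGf : ∀ f, ContinuousOn f (Icc a b) → ContinuousOn (fun s => G s (f s)) (Icc a b) :=
    fun f hf => hGcont.comp (continuousOn_id.prodMk hf) fun s hs => ⟨hs, mem_univ _⟩
  have hycont : ∀ k, ContinuousOn (y k) (Icc a b) := by
    intro k
    induction k with
    | zero => exact hy0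
    | succ k ih =>
      exact (hy0.add (continuousOn_integral_exp_sub_smul_apply A hab (hGf _ ih))).congr
        fun x _ => hiter k x
  intro x hx
  have hsub : [[a, x]] ⊆ Icc a b := uIcc_subset_Icc (left_mem_Icc.2 hab) hx
  have hkernel : ContinuousOn (fun s => exp ((x - s) • A)) (Icc a b) :=
    ((continuous_exp_smul A).comp (continuous_sub_left x)).continuousOn
  have hint : Tendsto (fun k => ∫ s in a..x, exp ((x - s) • A) (G s (y k s))) atTop
      (𝓝 (∫ s in a..x, exp ((x - s) • A) (G s (ylim s)))) :=
    TendstoUniformlyOn.tendsto_intervalIntegral_of_continuousOn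
      (.of_forall fun k => (hkernel.clm_apply (hGf _ (hycont k))).mono hsub)
      (((hconv.comp_lipschitzWith hGlip).clm_apply isCompact_Icc hkernel).mono hsub)
  refine tendsto_nhds_unique ((hconv.tendsto_at hx).comp (tendsto_add_atTop_nat 1)) ?_
  simpa only [Function.comp_def, hiter] using tendsto_const_nhds.add hint
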